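/- arXiv:math/0601573 — 2 statements merged into one kernel-verified Lean document; each statement's English description precedes it below -/
import Mathlib

section
/- With the above notation, for every finitely supported n : ℕ≥1 → ℕ and every m ≥ 1 such that n(j) = 0 for all j ≥ m, one has P(n + 1_m) = (c_m + o_m(n)) · P(n) in R, where 1_m denotes the indicator function of {m}. -/
/-- `o_m(n) = ∑_{k ≥ 1, 2^k ∣ m} (m/2^k) · n(m/2^k)`. -/
def oFun (n : ℕ →₀ ℕ) (m : ℕ) : ℕ :=
  ∑ k ∈ (Finset.Icc 1 m).filter (fun k => 2 ^ k ∣ m), (m / 2 ^ k) * n (m / 2 ^ k)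

/-- The explicit product
`P(n) = ∏_{l : n(l) ≥ 1} (c_l + o_l(n)) · ∏_{i=0}^{n(l)−2} (c_l + o_l(n) + l·(n(l)−2−2i))`. -/
def Pfun {R : Type*} [CommRing R] (c : ℕ → R) (n : ℕ →₀ ℕ) : R :=
  ∏ l ∈ n.support,
    (c l + (oFun n l : R)) *
      ∏ i ∈ Finset.range (n l - 1),
        (c l + (oFun n l : R) + (((l : ℤ) * ((n l : ℤ) - 2 - 2 * (i : ℤ)) : ℤ) : R))

/- Each factor of `P(n)` depends on `n` only through the two numbers `n(l)` and `o_l(n)`, and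
`o_l(n)` only reads `n` strictly below `l`. Adding `1_m` with `m` above the support therefore
leaves every old factor unchanged and contributes the single new factor `c_m + o_m(n)`. -/

open Finset

theorem oFun_congr {n n' : ℕ →₀ ℕ} {l : ℕ} (h : ∀ j < l, n j = n' j) :
    oFun n l = oFun n' l := by
  refine sum_congr rfl fun k hk => ?_
  obtain ⟨⟨hk1, hkl⟩, -⟩ := by simpa only [mem_filter, mem_Icc] using hk
  rw [h _ (Nat.div_lt_self (by omega) (Nat.one_lt_two_pow (by omega)))]

theorem oFun_add_single_of_le (n : ℕ →₀ ℕ) {l m : ℕ} (hl : l ≤ m) (a : ℕ) :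
    oFun (n + Finsupp.single m a) l = oFun n l :=
  oFun_congr fun j hj => by simp [(hj.trans_le hl).ne']

def pFactor {R : Type*} [CommRing R] (c : ℕ → R) (l a o : ℕ) : R :=
  (c l + (o : R)) *
    ∏ i ∈ range (a - 1), (c l + (o : R) + (((l : ℤ) * ((a : ℤ) - 2 - 2 * (i : ℤ)) : ℤ) : R))

theorem Pfun_eq_prod_pFactor {R : Type*} [CommRing R] (c : ℕ → R) (n : ℕ →₀ ℕ) :
    Pfun c n = ∏ l ∈ n.support, pFactor c l (n l) (oFun n l) :=
  rfl

@[simp]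
theorem pFactor_one {R : Type*} [CommRing R] (c : ℕ → R) (l o : ℕ) :
    pFactor c l 1 o = c l + o := by
  simp [pFactor]

theorem support_add_single_of_eq_zero {n : ℕ →₀ ℕ} {m a : ℕ} (ha : a ≠ 0) (hm : n m = 0) :
    (n + Finsupp.single m a).support = insert m n.support := by
  rw [Finsupp.support_add_eq, Finsupp.support_single m ha, union_comm]
  · rfl
  · simp [Finsupp.support_single m ha, hm]

theorem Pfun_add_one_general {R : Type*} [CommRing R] (c : ℕ → R) (n : ℕ →₀ ℕ)
    (m : ℕ) (h : ∀ j, m ≤ j → n j = 0) :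
    Pfun c (n + Finsupp.single m 1) = (c m + (oFun n m : R)) * Pfun c n := by
  have hnm : n m = 0 := h m le_rfl
  have hlt : ∀ l ∈ n.support, l < m := fun l hl => by
    by_contra! hle
    exact Finsupp.mem_support_iff.mp hl (h l hle)
  rw [Pfun_eq_prod_pFactor, Pfun_eq_prod_pFactor, support_add_single_of_eq_zero one_ne_zero hnm,
    prod_insert (by simp [hnm])]
  congr 1
  · simp [hnm, oFun_add_single_of_le n le_rfl]
  · refine prod_congr rfl fun l hl => ?_
    simp [(hlt l hl).ne', oFun_add_single_of_le n (hlt l hl).le]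

/-- The linear recurrence: if `n(j) = 0` for all `j ≥ m` (with `m ≥ 1` and `n`
supported on positive integers), then `P(n + 1_m) = (c_m + o_m(n)) · P(n)`. -/
theorem Pfun_add_one {R : Type*} [CommRing R] (c : ℕ → R) (n : ℕ →₀ ℕ)
    (h0 : n 0 = 0) (m : ℕ) (hm : 1 ≤ m) (h : ∀ j, m ≤ j → n j = 0) :
    Pfun c (n + Finsupp.single m 1) = (c m + (oFun n m : R)) * Pfun c n :=
  Pfun_add_one_general c n m h
end

section
/- For every real t with 0 < t and t ≠ 1, the function f(u) = ((−u·t + √(1 + u²·t))/(1 − t)) · exp(arsinh(u·√t)/√t) satisfies f(0) = 1/(1 − t), and for every integer n ≥ 1 its n-th derivative at 0 equals ∏_{i=0}^{⌊(n−3)/2⌋} (1 − (n−3−2i)²·t), the product being empty (equal to 1) when n ≤ 2. (This is the super Poincaré series form of the extended cycle index Z⁺_Λ: the coefficient of uⁿ/n! is the Poincaré polynomial of \overline{M_{0,n}}(ℝ).) -/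
/-!
The derivative of `f` is `g u = exp (arsinh (u √t) / √t)`, and `g' · √(1 + u²t) = g`. Hence `g`
solves `(1 + u²t) g'' + u t g' = g`; differentiating this `n` times and evaluating at `0` gives
`g⁽ⁿ⁺²⁾(0) = (1 - n²t) g⁽ⁿ⁾(0)`, which with `g(0) = g'(0) = 1` unfolds into the product.
-/

open Real Finset
open scoped ContDiff

section ODE

variable {g : ℝ → ℝ} {t : ℝ}

lemma iteratedDeriv_ode (hg : ContDiff ℝ ∞ g)
    (hode : ∀ u, (1 + u ^ 2 * t) * iteratedDeriv 2 g u + u * t * iteratedDeriv 1 g u = g u)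
    (n : ℕ) (u : ℝ) :
    (1 + u ^ 2 * t) * iteratedDeriv (n + 2) g u + (2 * n + 1) * u * t * iteratedDeriv (n + 1) g u =
      (1 - (n : ℝ) ^ 2 * t) * iteratedDeriv n g u := by
  induction n generalizing u with
  | zero => simpa using hode u
  | succ n ih =>
    have hD : ∀ k u, HasDerivAt (iteratedDeriv k g) (iteratedDeriv (k + 1) g u) u := fun k u => by
      rw [iteratedDeriv_succ]
      exact (hg.differentiable_iteratedDeriv k (mod_cast ENat.natCast_lt_top k) u).hasDerivAt
    have hq : HasDerivAt (fun u : ℝ => 1 + u ^ 2 * t) (2 * u * t) u := by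
      simpa using ((hasDerivAt_pow 2 u).mul_const t).const_add 1
    have hl : HasDerivAt (fun u : ℝ => (2 * n + 1) * u * t) ((2 * n + 1) * t) u := by
      simpa using ((hasDerivAt_id u).const_mul (2 * (n : ℝ) + 1)).mul_const t
    have hlhs := (hq.mul (hD (n + 2) u)).add (hl.mul (hD (n + 1) u))
    have hrhs := (hD n u).const_mul (1 - (n : ℝ) ^ 2 * t)
    have hEq := hlhs.unique (funext ih ▸ hrhs)
    push_cast
    linear_combination hEq

lemma iteratedDeriv_add_two_zero (hg : ContDiff ℝ ∞ g)
    (hode : ∀ u, (1 + u ^ 2 * t) * iteratedDeriv 2 g u + u * t * iteratedDeriv 1 g u = g u)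
    (n : ℕ) :
    iteratedDeriv (n + 2) g 0 = (1 - (n : ℝ) ^ 2 * t) * iteratedDeriv n g 0 := by
  simpa using iteratedDeriv_ode hg hode n 0

end ODE

lemma eq_prod_of_recurrence {a : ℕ → ℝ} {t : ℝ} (h0 : a 0 = 1) (h1 : a 1 = 1)
    (hrec : ∀ n, a (n + 2) = (1 - (n : ℝ) ^ 2 * t) * a n) (m : ℕ) :
    a (m + 2) = ∏ i ∈ range (m / 2 + 1), (1 - ((m : ℝ) - 2 * i) ^ 2 * t) := by
  induction m using Nat.strong_induction_on with
  | _ m ih =>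
    match m with
    | 0 => simp [hrec, h0]
    | 1 => simp [hrec, h1]
    | m + 2 =>
      rw [hrec, ih m (by omega), show (m + 2) / 2 + 1 = m / 2 + 1 + 1 by omega,
        prod_range_succ' _ (m / 2 + 1), mul_comm]
      push_cast
      congr 1
      · exact prod_congr rfl fun i _ => by ring
      · ring

lemma hasDerivAt_sqrt_one_add_sq_mul {t : ℝ} (ht : 0 ≤ t) (u : ℝ) :
    HasDerivAt (fun u : ℝ => √(1 + u ^ 2 * t)) (u * t / √(1 + u ^ 2 * t)) u := by
  have hq : HasDerivAt (fun u : ℝ => 1 + u ^ 2 * t) (2 * u * t) u := by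
    simpa using ((hasDerivAt_pow 2 u).mul_const t).const_add 1
  refine ((hasDerivAt_sqrt (by positivity)).comp u hq).congr_deriv ?_
  field_simp

/-- The derivative of the extended cycle index. -/
noncomputable def expArsinh (t u : ℝ) : ℝ := exp (arsinh (u * √t) / √t)

section expArsinh

variable {t : ℝ}

lemma contDiff_expArsinh : ContDiff ℝ ∞ (expArsinh t) :=
  (((contDiff_id.mul contDiff_const).arsinh).div_const _).exp

lemma expArsinh_zero : expArsinh t 0 = 1 := by simp [expArsinh]

lemma hasDerivAt_expArsinh (ht : 0 < t) (u : ℝ) :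
    HasDerivAt (expArsinh t) (expArsinh t u / √(1 + u ^ 2 * t)) u := by
  have hlin : HasDerivAt (fun u : ℝ => u * √t) √t u := by
    simpa using (hasDerivAt_id u).mul_const √t
  refine (((hasDerivAt_arsinh _).comp u hlin).div_const √t).exp.congr_deriv ?_
  have : 0 < √t := sqrt_pos.2 ht
  rw [mul_pow, sq_sqrt ht.le]
  simp only [expArsinh, Function.comp_apply]
  field_simp

lemma deriv_expArsinh (ht : 0 < t) :
    deriv (expArsinh t) = fun u => expArsinh t u / √(1 + u ^ 2 * t) :=
  funext fun u => (hasDerivAt_expArsinh ht u).deriv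

lemma expArsinh_ode (ht : 0 < t) (u : ℝ) :
    (1 + u ^ 2 * t) * iteratedDeriv 2 (expArsinh t) u + u * t * iteratedDeriv 1 (expArsinh t) u =
      expArsinh t u := by
  have hR : 0 < √(1 + u ^ 2 * t) := sqrt_pos.2 (by positivity)
  have hD2 : iteratedDeriv 2 (expArsinh t) u =
      (expArsinh t u / √(1 + u ^ 2 * t) * √(1 + u ^ 2 * t) -
        expArsinh t u * (u * t / √(1 + u ^ 2 * t))) / √(1 + u ^ 2 * t) ^ 2 := by
    rw [iteratedDeriv_succ, iteratedDeriv_one, deriv_expArsinh ht]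
    exact ((hasDerivAt_expArsinh ht u).div (hasDerivAt_sqrt_one_add_sq_mul ht.le u) hR.ne').deriv
  have hR2 : √(1 + u ^ 2 * t) ^ 2 = 1 + u ^ 2 * t := sq_sqrt (by positivity)
  rw [hD2, iteratedDeriv_one, deriv_expArsinh ht, hR2]
  field_simp
  ring

lemma iteratedDeriv_expArsinh_zero (ht : 0 < t) (m : ℕ) :
    iteratedDeriv (m + 2) (expArsinh t) 0 =
      ∏ i ∈ range (m / 2 + 1), (1 - ((m : ℝ) - 2 * i) ^ 2 * t) :=
  eq_prod_of_recurrence (a := fun n => iteratedDeriv n (expArsinh t) 0)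
    (by simp [expArsinh_zero]) (by simp [deriv_expArsinh ht, expArsinh_zero])
    (iteratedDeriv_add_two_zero contDiff_expArsinh (expArsinh_ode ht)) m

end expArsinh

lemma hasDerivAt_extendedCycleIndex {t : ℝ} (ht : 0 < t) (ht1 : t ≠ 1) (u : ℝ) :
    HasDerivAt (fun u => ((-u * t + √(1 + u ^ 2 * t)) / (1 - t)) * expArsinh t u)
      (expArsinh t u) u := by
  have hR : 0 < √(1 + u ^ 2 * t) := sqrt_pos.2 (by positivity)
  have h1t : 1 - t ≠ 0 := sub_ne_zero.2 ht1.symm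
  have hlin : HasDerivAt (fun u : ℝ => -u * t) (-t) u := by
    simpa using (hasDerivAt_id u).neg.mul_const t
  refine (((hlin.add (hasDerivAt_sqrt_one_add_sq_mul ht.le u)).div_const (1 - t)).mul
    (hasDerivAt_expArsinh ht u)).congr_deriv ?_
  simp only [Pi.add_apply]
  field_simp
  ring

/-- For `0 < t`, `t ≠ 1`, the function
`f(u) = ((−u·t + √(1 + u²·t))/(1 − t)) · exp(arsinh(u·√t)/√t)` satisfies
`f(0) = 1/(1−t)`, and for every `n ≥ 1` its `n`-th derivative at `0` equals
`∏_{i=0}^{⌊(n−3)/2⌋} (1 − (n−3−2i)²·t)`, the product being empty (equal to `1`)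
when `n ≤ 2`. -/
theorem extended_cycle_index_coeffs (t : ℝ) (ht : 0 < t) (ht1 : t ≠ 1) :
    let f : ℝ → ℝ := fun u =>
      ((-u * t + Real.sqrt (1 + u ^ 2 * t)) / (1 - t)) *
        Real.exp (Real.arsinh (u * Real.sqrt t) / Real.sqrt t)
    f 0 = 1 / (1 - t) ∧
    ∀ n : ℕ, 1 ≤ n → iteratedDeriv n f 0 =
      if n ≤ 2 then 1
      else ∏ i ∈ Finset.range ((n - 3) / 2 + 1), (1 - ((n : ℝ) - 3 - 2 * i) ^ 2 * t) := by
  intro f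
  have hf : deriv f = expArsinh t :=
    funext fun u => (hasDerivAt_extendedCycleIndex ht ht1 u).deriv
  refine ⟨by simp [f], fun n hn => ?_⟩
  obtain ⟨k, rfl⟩ : ∃ k, n = k + 1 := ⟨n - 1, by omega⟩
  rw [iteratedDeriv_succ', hf]
  match k with
  | 0 => simp [expArsinh_zero]
  | 1 => simp [deriv_expArsinh ht, expArsinh_zero]
  | m + 2 =>
    rw [iteratedDeriv_expArsinh_zero ht, if_neg (by omega), show m + 2 + 1 - 3 = m by omega]
    push_cast
    exact prod_congr rfl fun i _ => by ring
end
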